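/- Let X be a separable real Hilbert space and Y a real Banach space continuously embedded in X. Let T : ℝ^q → B(X) be such that every T(η) is a surjective linear isometry of X and η ↦ T(η)φ is continuous for every φ ∈ X. Let z ∈ L²(0,T;X) and p ∈ L²(0,T;ℝ^q), and define the transformed data w(t) := T(p(t))* z(t); assume w(t) ∈ Y for almost every t with w ∈ L²(0,T;Y). Let φ* = (φ₁*, …, φ_r*) be an orthonormal family in X of eigenvectors of the POD operator R_w of w, with R_w φ_i* = λ_i φ_i* and λ₁ ≥ … ≥ λ_r > 0, which minimizes the POD projection error ∫₀ᵀ ‖w(t) − Σ_{j=1}^r ⟨w(t), ψ_j⟩ ψ_j‖² dt over all orthonormal families ψ₁, …, ψ_r in X, and set z̃_i*(t) := ⟨w(t), φ_i*⟩. If the constant C in the admissible set A satisfies C ≥ max{ (1/(2λ_r))(‖z‖²_{L²(0,T;X)} + ‖w‖²_{L²(0,T;Y)}), ‖z‖_{L²(0,T;X)} }, then (z̃*, φ*) belongs to A and minimizes J(z̃, φ) := (1/2) ∫₀ᵀ ‖z(t) − T(p(t)) Σ_{i=1}^r z̃_i(t) φ_i‖²_X dt over A. -/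

import Mathlib

open MeasureTheory Module Filter
open scoped RealInnerProductSpace

/-- The admissible set: pairs `(z̃, φ)` with `z̃_i ∈ L²(0,T)`,
`‖z̃_i‖_{L²} ≤ C`, `φ_i ∈ Y` (via the embedding `J`) with `‖φ_i‖_Y ≤ C`, and
`‖φ_i‖_X = 1`. -/
def SPodAdmissible {X Y : Type*} [NormedAddCommGroup X] [InnerProductSpace ℝ X]
    [NormedAddCommGroup Y] [NormedSpace ℝ Y]
    (J : Y →L[ℝ] X) (Tend : ℝ) (r : ℕ) (C : ℝ)
    (zt : Fin r → ℝ → ℝ) (φ : Fin r → X) : Prop :=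
  (∀ i, MemLp (zt i) 2 (volume.restrict (Set.Ioo 0 Tend))) ∧
  (∀ i, eLpNorm (zt i) 2 (volume.restrict (Set.Ioo 0 Tend)) ≤ ENNReal.ofReal C) ∧
  (∀ i, ∃ ψ : Y, J ψ = φ i ∧ ‖ψ‖ ≤ C) ∧
  (∀ i, ‖φ i‖ = 1)

lemma proj_min {X : Type*} [NormedAddCommGroup X] [InnerProductSpace ℝ X] {r : ℕ}
    {ψ : Fin r → X} (h : Orthonormal ℝ ψ) (w v : X)
    (hv : v ∈ Submodule.span ℝ (Set.range ψ)) :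
    ‖w - ∑ j, ⟪w, ψ j⟫ • ψ j‖ ≤ ‖w - v‖ := by
  set P := ∑ j, ⟪w, ψ j⟫ • ψ j with hP
  have horth : ∀ x ∈ Submodule.span ℝ (Set.range ψ), ⟪w - P, x⟫ = 0 := by
    intro x hx
    induction hx using Submodule.span_induction with
    | mem x hx =>
      obtain ⟨j, rfl⟩ := hx
      rw [inner_sub_left, hP, h.inner_left_fintype]; simp
    | zero => simp
    | add x y _ _ hx hy => rw [inner_add_right, hx, hy, add_zero]
    | smul a x _ hx => rw [inner_smul_right, hx, mul_zero]
  have hPmem : P ∈ Submodule.span ℝ (Set.range ψ) := by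
    exact Submodule.sum_mem _ fun j _ => Submodule.smul_mem _ _
      (Submodule.subset_span ⟨j, rfl⟩)
  have key : ‖w - v‖ ^ 2 = ‖w - P‖ ^ 2 + ‖P - v‖ ^ 2 := by
    have : w - v = (w - P) + (P - v) := by abel
    rw [this, norm_add_sq_real, horth _ (Submodule.sub_mem _ hPmem hv)]
    ring
  nlinarith [norm_nonneg (w - v), norm_nonneg (w - P), norm_nonneg (P - v)]

lemma exists_orthonormal_span {X : Type*} [NormedAddCommGroup X] [InnerProductSpace ℝ X] {r : ℕ}
    {φs : Fin r → X} (hon : Orthonormal ℝ φs) (φ : Fin r → X) :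
    ∃ ψ : Fin r → X, Orthonormal ℝ ψ ∧ ∀ i, φ i ∈ Submodule.span ℝ (Set.range ψ) := by
  classical
  -- ambient finite-dimensional subspace
  set F : Submodule ℝ X := Submodule.span ℝ (Set.range φ ∪ Set.range φs) with hF
  have hfin : FiniteDimensional ℝ F := by
    apply FiniteDimensional.span_of_finite
    exact (Set.finite_range φ).union (Set.finite_range φs)
  have hφF : ∀ i, φ i ∈ F := fun i =>
    Submodule.subset_span (Set.mem_union_left _ ⟨i, rfl⟩)
  have hφsF : ∀ i, φs i ∈ F := fun i =>
    Submodule.subset_span (Set.mem_union_right _ ⟨i, rfl⟩)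
  -- φs as orthonormal family in F
  set φs' : Fin r → F := fun i => ⟨φs i, hφsF i⟩ with hφs'
  have honF : Orthonormal ℝ φs' := by
    rw [orthonormal_iff_ite] at hon ⊢
    intro i j
    simpa [φs', Submodule.coe_inner] using hon i j
  -- dimensions
  set n := finrank ℝ F with hn
  have hrn : r ≤ n := by
    simpa using honF.linearIndependent.fintype_card_le_finrank
  -- subspace spanned by φ inside F
  set φ' : Fin r → F := fun i => ⟨φ i, hφF i⟩ with hφ'
  set V : Submodule ℝ F := Submodule.span ℝ (Set.range φ') with hV
  set m := finrank ℝ V with hm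
  have hmr : m ≤ r := by
    have h1 : finrank ℝ V ≤ (Set.range φ').toFinset.card := finrank_span_le_card _
    have h2 : (Set.range φ').toFinset.card ≤ r := by
      rw [Set.toFinset_range]
      exact (Finset.card_image_le).trans (by simp)
    exact h1.trans h2
  -- orthonormal basis of V, as family in F supported on first m indices
  let b₀ : OrthonormalBasis (Fin m) ℝ V := stdOrthonormalBasis ℝ V
  set v : Fin n → F := fun j => if h : (j : ℕ) < m then (b₀ ⟨j, h⟩ : V) else 0 with hv
  set s : Set (Fin n) := {j | (j : ℕ) < m} with hs
  have hres : Orthonormal ℝ (s.restrict v) := by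
    rw [orthonormal_iff_ite]
    rintro ⟨i, hi⟩ ⟨j, hj⟩
    have hi' : (i : ℕ) < m := hi
    have hj' : (j : ℕ) < m := hj
    have hb₀ := b₀.orthonormal
    rw [orthonormal_iff_ite] at hb₀
    have := hb₀ ⟨i, hi'⟩ ⟨j, hj'⟩
    change ⟪(if h : (i:ℕ) < m then ((b₀ ⟨i, h⟩ : V) : F) else 0), (if h : (j:ℕ) < m then ((b₀ ⟨j, h⟩ : V) : F) else 0)⟫ = _
    rw [dif_pos hi', dif_pos hj']
    rw [Submodule.coe_inner] at this
    rw [this]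
    simp [Fin.ext_iff, Subtype.ext_iff]
  obtain ⟨b, hb⟩ := hres.exists_orthonormalBasis_extension_of_card_eq (by simp [hn])
  set ψ : Fin r → X := fun i => ((b (Fin.castLE hrn i) : F) : X) with hψ
  have honψ : Orthonormal ℝ ψ := by
    have hbo := b.orthonormal
    rw [orthonormal_iff_ite] at hbo ⊢
    intro i j
    have := hbo (Fin.castLE hrn i) (Fin.castLE hrn j)
    rw [Submodule.coe_inner] at this
    rw [hψ]
    simp only [this]
    simp [Fin.ext_iff]
  refine ⟨ψ, honψ, fun i => ?_⟩
  -- the basis vectors of V are among ψ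
  set L : V →ₗ[ℝ] X := F.subtype.comp V.subtype with hL
  have hrange : Set.range (L ∘ ⇑b₀) ⊆ Set.range ψ := by
    rintro - ⟨k, rfl⟩
    refine ⟨Fin.castLE hmr k, ?_⟩
    have hk : ((Fin.castLE hrn (Fin.castLE hmr k) : Fin n) : ℕ) < m := by
      simpa using k.2
    have hbk := hb (Fin.castLE hrn (Fin.castLE hmr k)) hk
    rw [hψ]
    simp only [hbk, hv, dif_pos hk]
    congr 1
  have hξmem : φ' i ∈ V := Submodule.subset_span ⟨i, rfl⟩
  set ξ : V := ⟨φ' i, hξmem⟩ with hξ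
  have hξspan : ξ ∈ Submodule.span ℝ (Set.range ⇑b₀) := by
    rw [← b₀.coe_toBasis, Basis.span_eq]
    trivial
  have hmap : L ξ ∈ Submodule.map L (Submodule.span ℝ (Set.range ⇑b₀)) :=
    Submodule.mem_map_of_mem hξspan
  rw [Submodule.map_span, ← Set.range_comp] at hmap
  have hLξ : L ξ = φ i := rfl
  rw [hLξ] at hmap
  exact Submodule.span_mono hrange hmap

/-- Single-transformation case: if all modes are transformed
by the same isometric transformation `T(p(t))`, then the POD modes `φ*` of the
transformed data `w(t) = T(p(t))* z(t)` (with eigenvalues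
`λ₁ ≥ … ≥ λ_r > 0`) together with the coefficients `z̃*_i(t) = ⟪w(t), φ*_i⟫`
belong to the admissible set (provided `C` is large enough) and minimize
`J(z̃, φ) = ½∫₀ᵀ ‖z(t) − T(p(t)) ∑ᵢ z̃ᵢ(t) φᵢ‖² dt` over it. -/
theorem sPod_single_transformation_reduces_to_pod
    {X Y : Type*} [NormedAddCommGroup X] [InnerProductSpace ℝ X] [CompleteSpace X]
    [TopologicalSpace.SeparableSpace X]
    [NormedAddCommGroup Y] [NormedSpace ℝ Y] [CompleteSpace Y]
    (J : Y →L[ℝ] X) (hJinj : Function.Injective J)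
    (q : ℕ) (T : (Fin q → ℝ) → (X ≃ₗᵢ[ℝ] X))
    (hTcont : ∀ φ : X, Continuous fun η => T η φ)
    (Tend : ℝ) (z : ℝ → X) (hz : MemLp z 2 (volume.restrict (Set.Ioo 0 Tend)))
    (p : ℝ → Fin q → ℝ) (hp : MemLp p 2 (volume.restrict (Set.Ioo 0 Tend)))
    -- transformed data `w = T(p)⁻¹ z = T(p)* z`, with values in `Y` a.e.
    (w : ℝ → X) (hw : ∀ t, w t = (T (p t)).symm (z t))
    (wY : ℝ → Y) (hwY : MemLp wY 2 (volume.restrict (Set.Ioo 0 Tend)))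
    (hJw : ∀ᵐ t ∂(volume.restrict (Set.Ioo 0 Tend)), J (wY t) = w t)
    -- POD modes of the transformed data with positive, nonincreasing eigenvalues
    (r : ℕ) (φs : Fin r → X) (hon : Orthonormal ℝ φs)
    (lam : Fin r → ℝ) (hlampos : ∀ i, 0 < lam i)
    (hlammono : ∀ i j : Fin r, i ≤ j → lam j ≤ lam i)
    (heig : ∀ i, (∫ t in Set.Ioo 0 Tend, ⟪w t, φs i⟫ • w t) = lam i • φs i)
    (hmin : ∀ ψ : Fin r → X, Orthonormal ℝ ψ →
      (∫ t in Set.Ioo 0 Tend, ‖w t - ∑ j, ⟪w t, φs j⟫ • φs j‖ ^ 2)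
        ≤ ∫ t in Set.Ioo 0 Tend, ‖w t - ∑ j, ⟪w t, ψ j⟫ • ψ j‖ ^ 2)
    (zts : Fin r → ℝ → ℝ) (hzts : ∀ i t, zts i t = ⟪w t, φs i⟫)
    -- the constant `C` dominates `max{(1/(2λ_r))(‖z‖² + ‖w‖²_Y), ‖z‖}`
    (C : ℝ)
    (hC1 : ∀ i, (1 / (2 * lam i)) *
        ((∫ t in Set.Ioo 0 Tend, ‖z t‖ ^ 2) + ∫ t in Set.Ioo 0 Tend, ‖wY t‖ ^ 2) ≤ C)
    (hC2 : Real.sqrt (∫ t in Set.Ioo 0 Tend, ‖z t‖ ^ 2) ≤ C) :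
    SPodAdmissible J Tend r C zts φs ∧
    ∀ zt φ, SPodAdmissible J Tend r C zt φ →
      (1 / 2) * (∫ t in Set.Ioo 0 Tend, ‖z t - T (p t) (∑ i, zts i t • φs i)‖ ^ 2)
        ≤ (1 / 2) * ∫ t in Set.Ioo 0 Tend, ‖z t - T (p t) (∑ i, zt i t • φ i)‖ ^ 2 := by
  classical
  set μ := volume.restrict (Set.Ioo 0 Tend) with hμ
  have hwz : ∀ t, ‖w t‖ = ‖z t‖ := fun t => by
    rw [hw]; exact (T (p t)).symm.norm_map _
  have hwmem : MemLp w 2 μ := (J.comp_memLp' hwY).ae_eq hJw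
  have hztsmem : ∀ i, MemLp (zts i) 2 μ := by
    intro i
    have h1 : MemLp (fun t => ⟪w t, φs i⟫) 2 μ := hwmem.inner_const (φs i)
    have h2 : zts i = fun t => ⟪w t, φs i⟫ := funext fun t => hzts i t
    rw [h2]; exact h1
  have hztsbd : ∀ i, ∀ t, ‖zts i t‖ ≤ ‖z t‖ := by
    intro i t
    rw [hzts]
    calc ‖⟪w t, φs i⟫‖ ≤ ‖w t‖ * ‖φs i‖ := norm_inner_le_norm _ _
    _ = ‖z t‖ := by rw [hon.1 i, hwz, mul_one]
  -- integrability of squared norms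
  have hsqz : Integrable (fun t => ‖z t‖ ^ 2) μ := by
    have := hz.integrable_norm_rpow two_ne_zero ENNReal.ofNat_ne_top
    simpa [ENNReal.toReal_ofNat, Real.rpow_natCast] using this
  have hsqwY : Integrable (fun t => ‖wY t‖ ^ 2) μ := by
    have := hwY.integrable_norm_rpow two_ne_zero ENNReal.ofNat_ne_top
    simpa [ENNReal.toReal_ofNat, Real.rpow_natCast] using this
  -- admissibility
  have hadm : SPodAdmissible J Tend r C zts φs := by
    refine ⟨hztsmem, fun i => ?_, fun i => ?_, hon.1⟩
    · -- eLpNorm bound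
      have h1 : eLpNorm (zts i) 2 μ ≤ eLpNorm z 2 μ :=
        eLpNorm_mono_ae (Eventually.of_forall (hztsbd i))
      have h2 : eLpNorm z 2 μ = ENNReal.ofReal ((∫ t, ‖z t‖ ^ (2:ℝ) ∂μ) ^ (2:ℝ)⁻¹) := by
        simpa [ENNReal.toReal_ofNat] using
          hz.eLpNorm_eq_integral_rpow_norm two_ne_zero ENNReal.ofNat_ne_top
      have h3 : (∫ t, ‖z t‖ ^ (2:ℝ) ∂μ) ^ (2:ℝ)⁻¹ ≤ C := by
        have he : (∫ t, ‖z t‖ ^ (2:ℝ) ∂μ) = ∫ t, ‖z t‖ ^ 2 ∂μ :=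
          integral_congr_ae (Eventually.of_forall fun t => by
            dsimp only
            rw [show ((2:ℝ)) = ((2:ℕ):ℝ) by norm_num, Real.rpow_natCast])
        rw [he, show ((2:ℝ))⁻¹ = (1:ℝ)/2 by norm_num, ← Real.sqrt_eq_rpow]
        exact hC2
      calc eLpNorm (zts i) 2 μ ≤ eLpNorm z 2 μ := h1
      _ = ENNReal.ofReal ((∫ t, ‖z t‖ ^ (2:ℝ) ∂μ) ^ (2:ℝ)⁻¹) := h2
      _ ≤ ENNReal.ofReal C := ENNReal.ofReal_le_ofReal h3
    · -- Y representative
      have hint : Integrable (fun t => zts i t • wY t) μ := by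
        have h1 : MemLp ((zts i) • wY) 1 μ := hwY.smul (hztsmem i) (hpqr := ⟨by simp [ENNReal.inv_two_add_inv_two]⟩)
        rw [← memLp_one_iff_integrable]
        exact h1
      set I : Y := ∫ t, zts i t • wY t ∂μ with hI
      have hJI : J I = lam i • φs i := by
        rw [hI, ← ContinuousLinearMap.integral_comp_comm J hint, ← heig i]
        refine integral_congr_ae (hJw.mono fun t ht => ?_)
        dsimp only
        rw [_root_.map_smul, ht, hzts]
      refine ⟨(lam i)⁻¹ • I, ?_, ?_⟩
      · rw [_root_.map_smul, hJI, smul_smul, inv_mul_cancel₀ (hlampos i).ne', one_smul]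
      · have hbd : ‖I‖ ≤ (1/2) * ((∫ t, ‖z t‖^2 ∂μ) + ∫ t, ‖wY t‖^2 ∂μ) := by
          calc ‖I‖ ≤ ∫ t, ‖zts i t • wY t‖ ∂μ := norm_integral_le_integral_norm _
          _ ≤ ∫ t, (1/2) * (‖z t‖^2 + ‖wY t‖^2) ∂μ := by
              refine integral_mono_of_nonneg
                (Eventually.of_forall fun t => norm_nonneg _)
                ((hsqz.add hsqwY).const_mul _)
                (Eventually.of_forall fun t => ?_)
              dsimp only
              rw [norm_smul]
              have h1 : ‖zts i t‖ ≤ ‖z t‖ := hztsbd i t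
              nlinarith [norm_nonneg (zts i t), norm_nonneg (wY t), norm_nonneg (z t),
                sq_nonneg (‖z t‖ - ‖wY t‖)]
          _ = (1/2) * ((∫ t, ‖z t‖^2 ∂μ) + ∫ t, ‖wY t‖^2 ∂μ) := by
              rw [integral_const_mul, integral_add hsqz hsqwY]
        have hnorm : ‖(lam i)⁻¹ • I‖ = (lam i)⁻¹ * ‖I‖ := by
          rw [norm_smul, Real.norm_eq_abs, abs_of_pos (by have := hlampos i; positivity)]
        rw [hnorm]
        calc (lam i)⁻¹ * ‖I‖
            ≤ (lam i)⁻¹ * ((1/2) * ((∫ t, ‖z t‖^2 ∂μ) + ∫ t, ‖wY t‖^2 ∂μ)) :=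
              mul_le_mul_of_nonneg_left hbd (by have := hlampos i; positivity)
          _ = (1 / (2 * lam i)) * ((∫ t, ‖z t‖^2 ∂μ) + ∫ t, ‖wY t‖^2 ∂μ) := by
              simp only [div_eq_mul_inv, one_mul, mul_inv_rev]
              ring
          _ ≤ C := hC1 i
  refine ⟨hadm, ?_⟩
  rintro zt φ ⟨hzt1, hzt2, hzt3, hzt4⟩
  have hiso : ∀ (t : ℝ) (v : X), ‖z t - T (p t) v‖ = ‖w t - v‖ := by
    intro t v
    conv_lhs => rw [show z t = T (p t) (w t) by rw [hw]; simp]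
    rw [← map_sub, (T (p t)).norm_map]
  obtain ⟨ψ, honψ, hspan⟩ := exists_orthonormal_span hon φ
  have hL : (∫ t in Set.Ioo 0 Tend, ‖z t - T (p t) (∑ i, zts i t • φs i)‖ ^ 2)
      = ∫ t in Set.Ioo 0 Tend, ‖w t - ∑ j, ⟪w t, φs j⟫ • φs j‖ ^ 2 := by
    refine integral_congr_ae (Eventually.of_forall fun t => ?_)
    dsimp only
    rw [hiso]
    simp only [hzts]
  have hRmem : MemLp (fun t => w t - ∑ i, zt i t • φ i) 2 μ := by
    refine hwmem.sub ?_
    have : ∀ i ∈ Finset.univ, MemLp (fun t => zt i t • φ i) 2 μ := by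
      intro i _
      exact (memLp_top_const (φ i)).smul (hzt1 i)
    have hsum := memLp_finset_sum' Finset.univ this
    have he : (∑ i ∈ Finset.univ, fun t => zt i t • φ i) = fun t => ∑ i, zt i t • φ i := by
      funext t; simp
    rwa [he] at hsum
  have hRint : Integrable (fun t => ‖w t - ∑ i, zt i t • φ i‖ ^ 2) μ := by
    have := hRmem.integrable_norm_rpow two_ne_zero ENNReal.ofNat_ne_top
    simpa [ENNReal.toReal_ofNat, Real.rpow_natCast] using this
  have h2 : (∫ t in Set.Ioo 0 Tend, ‖w t - ∑ j, ⟪w t, ψ j⟫ • ψ j‖ ^ 2)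
      ≤ ∫ t in Set.Ioo 0 Tend, ‖w t - ∑ i, zt i t • φ i‖ ^ 2 := by
    rw [← hμ]
    refine integral_mono_of_nonneg (Eventually.of_forall fun t => by positivity)
      hRint (Eventually.of_forall fun t => ?_)
    have hmem : (∑ i, zt i t • φ i) ∈ Submodule.span ℝ (Set.range ψ) :=
      Submodule.sum_mem _ fun i _ => Submodule.smul_mem _ _ (hspan i)
    have := proj_min honψ (w t) _ hmem
    exact pow_le_pow_left₀ (norm_nonneg _) this 2
  have hR : (∫ t in Set.Ioo 0 Tend, ‖w t - ∑ i, zt i t • φ i‖ ^ 2)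
      = ∫ t in Set.Ioo 0 Tend, ‖z t - T (p t) (∑ i, zt i t • φ i)‖ ^ 2 :=
    integral_congr_ae (Eventually.of_forall fun t => by dsimp only; rw [hiso])
  have hchain := (hmin ψ honψ).trans h2
  rw [hL]
  linarith [hchain, hR.le, hR.ge]
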